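/- arXiv:1210.2688 — 4 statements merged into one kernel-verified Lean document; each statement's English description precedes it below -/
import Mathlib

section
/- Let Z ⊆ V₁² × V₂² be a relation between pairs of nodes of two structures G₁ and G₂ such that: (Atoms) for all (a₁,b₁,a₂,b₂) ∈ Z and all relation names R, (a₁,b₁) ∈ R(G₁) ↔ (a₂,b₂) ∈ R(G₂), and a₁ = b₁ ↔ a₂ = b₂; (Composition Forth) for all (a₁,b₁,a₂,b₂) ∈ Z and c₁ ∈ V₁ there exists c₂ ∈ V₂ with (a₁,c₁,a₂,c₂) ∈ Z and (c₁,b₁,c₂,b₂) ∈ Z; (Composition Back) symmetrically. Then for any expression e built from relation names, ∅, id, union, intersection, composition, complement (relative to the node set squared), and for any (a₁,b₁,a₂,b₂) ∈ Z: (a₁,b₁) ∈ e(G₁) if and only if (a₂,b₂) ∈ e(G₂). -/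
/-- Composition of binary relations. -/
def rcomp {V : Type*} (R S : Set (V × V)) : Set (V × V) :=
  {p | ∃ v, (p.1, v) ∈ R ∧ (v, p.2) ∈ S}

/-- Converse of a binary relation. -/
def rconv {V : Type*} (R : Set (V × V)) : Set (V × V) :=
  {p | (p.2, p.1) ∈ R}

/-- Identity relation. -/
def ridR {V : Type*} : Set (V × V) := {p | p.1 = p.2}

/-- Left residual: e1 \ e2. -/
def rlres {V : Type*} (R S : Set (V × V)) : Set (V × V) :=
  {p | ∀ v, (p.2, v) ∈ S → (p.1, v) ∈ R}

/-- Right residual: e1 / e2. -/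
def rrres {V : Type*} (R S : Set (V × V)) : Set (V × V) :=
  {p | ∀ v, (v, p.1) ∈ R → (v, p.2) ∈ S}

/-- First projection. -/
def rproj1 {V : Type*} (R : Set (V × V)) : Set (V × V) :=
  {p | p.1 = p.2 ∧ ∃ t, (p.1, t) ∈ R}

/-- First coprojection. -/
def rcoproj1 {V : Type*} (R : Set (V × V)) : Set (V × V) :=
  {p | p.1 = p.2 ∧ ∀ t, (p.1, t) ∉ R}

/-- Expressions with relation names, `∅`, `id`, union, intersection,
composition, and complement (relative to the node set squared). -/
inductive ExprC (Λ : Type*) where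
  | rel : Λ → ExprC Λ
  | empty : ExprC Λ
  | idE : ExprC Λ
  | union : ExprC Λ → ExprC Λ → ExprC Λ
  | inter : ExprC Λ → ExprC Λ → ExprC Λ
  | compE : ExprC Λ → ExprC Λ → ExprC Λ
  | compl : ExprC Λ → ExprC Λ

/-- Semantics of an expression on the structure given by interpretation `I`. -/
def ExprC.sem {Λ V : Type*} (I : Λ → Set (V × V)) : ExprC Λ → Set (V × V)
  | .rel R => I R
  | .empty => ∅
  | .idE => ridR
  | .union e1 e2 => e1.sem I ∪ e2.sem I
  | .inter e1 e2 => e1.sem I ∩ e2.sem I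
  | .compE e1 e2 => rcomp (e1.sem I) (e2.sem I)
  | .compl e => (e.sem I)ᶜ

/-- Invariance of expressions (with complement) under a degree-unrestricted
bisimulation satisfying the Atoms, Composition Forth, and Composition Back
conditions. -/
theorem bisim_invariance {Λ V₁ V₂ : Type*}
    (I₁ : Λ → Set (V₁ × V₁)) (I₂ : Λ → Set (V₂ × V₂))
    (Z : V₁ → V₁ → V₂ → V₂ → Prop)
    (hatoms : ∀ a1 b1 a2 b2, Z a1 b1 a2 b2 →
      (∀ R, (a1, b1) ∈ I₁ R ↔ (a2, b2) ∈ I₂ R) ∧ (a1 = b1 ↔ a2 = b2))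
    (hforth : ∀ a1 b1 a2 b2, Z a1 b1 a2 b2 →
      ∀ c1, ∃ c2, Z a1 c1 a2 c2 ∧ Z c1 b1 c2 b2)
    (hback : ∀ a1 b1 a2 b2, Z a1 b1 a2 b2 →
      ∀ c2, ∃ c1, Z a1 c1 a2 c2 ∧ Z c1 b1 c2 b2) :
    ∀ (e : ExprC Λ) (a1 b1 : V₁) (a2 b2 : V₂), Z a1 b1 a2 b2 →
      ((a1, b1) ∈ e.sem I₁ ↔ (a2, b2) ∈ e.sem I₂) := by
  intro e
  induction e with
  | rel R => intro a1 b1 a2 b2 h; exact (hatoms _ _ _ _ h).1 R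
  | empty => intro a1 b1 a2 b2 h; simp [ExprC.sem]
  | idE => intro a1 b1 a2 b2 h; exact (hatoms _ _ _ _ h).2
  | union e1 e2 ih1 ih2 =>
      intro a1 b1 a2 b2 h
      exact or_congr (ih1 _ _ _ _ h) (ih2 _ _ _ _ h)
  | inter e1 e2 ih1 ih2 =>
      intro a1 b1 a2 b2 h
      exact and_congr (ih1 _ _ _ _ h) (ih2 _ _ _ _ h)
  | compE e1 e2 ih1 ih2 =>
      intro a1 b1 a2 b2 h
      constructor
      · rintro ⟨c1, h1, h2⟩
        obtain ⟨c2, hz1, hz2⟩ := hforth _ _ _ _ h c1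
        exact ⟨c2, (ih1 _ _ _ _ hz1).1 h1, (ih2 _ _ _ _ hz2).1 h2⟩
      · rintro ⟨c2, h1, h2⟩
        obtain ⟨c1, hz1, hz2⟩ := hback _ _ _ _ h c2
        exact ⟨c1, (ih1 _ _ _ _ hz1).2 h1, (ih2 _ _ _ _ hz2).2 h2⟩
  | compl e ih =>
      intro a1 b1 a2 b2 h
      exact not_congr (ih _ _ _ _ h)
end

section
/- Let (Z₀, Z₁, ..., Z_k) be a decreasing sequence of subsets of V₁² × V₂² (Z_i ⊆ Z_{i-1}) that is an (F,k)-bisimulation for the fragment with difference but without converse, projection, or residuals: Z₀ satisfies the Atoms conditions (same relation-name membership and identity agreement in both directions), and each element (a₁,b₁,a₂,b₂) of Z_i (for i ≥ 1) satisfies Composition Forth and Back at degree i: for every c₁ ∈ V₁ with (a₁,c₁), (c₁,b₁) ∈ Paths_{i-1}(G₁) there is c₂ ∈ V₂ with (a₁,c₁,a₂,c₂), (c₁,b₁,c₂,b₂) ∈ Z_{i-1}, and symmetrically with the roles of G₁ and G₂ swapped. Then for every expression e of degree at most k built from relation names, ∅, id, union, intersection, composition, and set difference, and every (a₁,b₁,a₂,b₂)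 ∈ Z_k: (a₁,b₁) ∈ e(G₁) ↔ (a₂,b₂) ∈ e(G₂). -/
/-- Pairs connected by a directed path of length exactly `n`. -/
def pathLen {V : Type*} (E : Set (V × V)) : ℕ → Set (V × V)
  | 0 => ridR
  | n + 1 => rcomp (pathLen E n) E

/-- Pairs connected by a directed path of length at most `n`. -/
def pathsLe {V : Type*} (E : Set (V × V)) (n : ℕ) : Set (V × V) :=
  {p | ∃ m ≤ n, p ∈ pathLen E m}

/-- Expressions with relation names, `∅`, `id`, union, intersection,
composition, and set difference. -/
inductive ExprD (Λ : Type*) where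
  | rel : Λ → ExprD Λ
  | empty : ExprD Λ
  | idE : ExprD Λ
  | union : ExprD Λ → ExprD Λ → ExprD Λ
  | inter : ExprD Λ → ExprD Λ → ExprD Λ
  | diff : ExprD Λ → ExprD Λ → ExprD Λ
  | compE : ExprD Λ → ExprD Λ → ExprD Λ

/-- Semantics of an expression on the structure given by interpretation `I`. -/
def ExprD.sem {Λ V : Type*} (I : Λ → Set (V × V)) : ExprD Λ → Set (V × V)
  | .rel R => I R
  | .empty => ∅
  | .idE => ridR
  | .union e1 e2 => e1.sem I ∪ e2.sem I
  | .inter e1 e2 => e1.sem I ∩ e2.sem I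
  | .diff e1 e2 => e1.sem I \ e2.sem I
  | .compE e1 e2 => rcomp (e1.sem I) (e2.sem I)

/-- Degree of an expression. -/
def ExprD.deg {Λ : Type*} : ExprD Λ → ℕ
  | .rel _ => 0
  | .empty => 0
  | .idE => 0
  | .union e1 e2 => max e1.deg e2.deg
  | .inter e1 e2 => max e1.deg e2.deg
  | .diff e1 e2 => max e1.deg e2.deg
  | .compE e1 e2 => 1 + max e1.deg e2.deg

lemma pathLen_trans {V : Type*} {E : Set (V × V)} :
    ∀ {n m : ℕ} {a b c : V}, (a, c) ∈ pathLen E m → (c, b) ∈ pathLen E n →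
      (a, b) ∈ pathLen E (m + n) := by
  intro n
  induction n with
  | zero => intro m a b c h1 h2; cases h2; simpa using h1
  | succ n ih =>
    intro m a b c h1 h2
    obtain ⟨v, hv1, hv2⟩ := h2
    exact ⟨v, ih h1 hv1, hv2⟩

lemma pathsLe_mono {V : Type*} {E : Set (V × V)} {m n : ℕ} (h : m ≤ n) :
    pathsLe E m ⊆ pathsLe E n := by
  rintro p ⟨l, hl, hp⟩; exact ⟨l, hl.trans h, hp⟩

lemma pathsLe_trans {V : Type*} {E : Set (V × V)} {m n : ℕ} {a b c : V}
    (h1 : (a, c) ∈ pathsLe E m) (h2 : (c, b) ∈ pathsLe E n) :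
    (a, b) ∈ pathsLe E (m + n) := by
  obtain ⟨l1, hl1, hp1⟩ := h1
  obtain ⟨l2, hl2, hp2⟩ := h2
  exact ⟨l1 + l2, Nat.add_le_add hl1 hl2, pathLen_trans hp1 hp2⟩

lemma sem_subset_paths {Λ V : Type*} (I : Λ → Set (V × V)) (e : ExprD Λ) :
    e.sem I ⊆ pathsLe (⋃ R, I R) (2 ^ e.deg) := by
  induction e with
  | rel R =>
    rintro ⟨a, b⟩ h
    exact ⟨1, Nat.one_le_two_pow, ⟨a, rfl, Set.mem_iUnion.2 ⟨R, h⟩⟩⟩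
  | empty => rintro p h; cases h
  | idE => rintro ⟨a, b⟩ h; exact ⟨0, Nat.zero_le _, h⟩
  | union e1 e2 ih1 ih2 =>
    rintro p (h | h)
    · exact pathsLe_mono (Nat.pow_le_pow_right (by norm_num) (le_max_left _ _)) (ih1 h)
    · exact pathsLe_mono (Nat.pow_le_pow_right (by norm_num) (le_max_right _ _)) (ih2 h)
  | inter e1 e2 ih1 ih2 =>
    rintro p ⟨h, _⟩
    exact pathsLe_mono (Nat.pow_le_pow_right (by norm_num) (le_max_left _ _)) (ih1 h)
  | diff e1 e2 ih1 ih2 =>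
    rintro p ⟨h, _⟩
    exact pathsLe_mono (Nat.pow_le_pow_right (by norm_num) (le_max_left _ _)) (ih1 h)
  | compE e1 e2 ih1 ih2 =>
    rintro ⟨a, b⟩ ⟨v, h1, h2⟩
    have := pathsLe_trans (ih1 h1) (ih2 h2)
    refine pathsLe_mono ?_ this
    have h1' : 2 ^ e1.deg ≤ 2 ^ max e1.deg e2.deg :=
      Nat.pow_le_pow_right (by norm_num) (le_max_left _ _)
    have h2' : 2 ^ e2.deg ≤ 2 ^ max e1.deg e2.deg :=
      Nat.pow_le_pow_right (by norm_num) (le_max_right _ _)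
    calc 2 ^ e1.deg + 2 ^ e2.deg ≤ 2 ^ max e1.deg e2.deg + 2 ^ max e1.deg e2.deg :=
          Nat.add_le_add h1' h2'
      _ = 2 ^ (1 + max e1.deg e2.deg) := by ring

/-- Invariance for the degree-bounded fragment with difference: if
`(Z₀,…,Z_k)` is an `(F,k)`-bisimulation (Atoms on `Z₀`, Composition Forth and
Back at each degree `i` with respect to `Z_{i-1}`), then expressions of degree
at most `k` cannot distinguish tuples in `Z_k`. -/
theorem bisim_invariance_deg {Λ V₁ V₂ : Type*}
    (I₁ : Λ → Set (V₁ × V₁)) (I₂ : Λ → Set (V₂ × V₂)) (k : ℕ)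
    (Z : ℕ → V₁ → V₁ → V₂ → V₂ → Prop)
    (hdec : ∀ i, i + 1 ≤ k → ∀ a1 b1 a2 b2,
      Z (i + 1) a1 b1 a2 b2 → Z i a1 b1 a2 b2)
    (hatoms : ∀ a1 b1 a2 b2, Z 0 a1 b1 a2 b2 →
      (∀ R, (a1, b1) ∈ I₁ R ↔ (a2, b2) ∈ I₂ R) ∧ (a1 = b1 ↔ a2 = b2))
    (hforth : ∀ i, 1 ≤ i → i ≤ k → ∀ a1 b1 a2 b2, Z i a1 b1 a2 b2 →
      ∀ c1, (a1, c1) ∈ pathsLe (⋃ R, I₁ R) (2 ^ (i - 1)) →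
        (c1, b1) ∈ pathsLe (⋃ R, I₁ R) (2 ^ (i - 1)) →
        ∃ c2, Z (i - 1) a1 c1 a2 c2 ∧ Z (i - 1) c1 b1 c2 b2)
    (hback : ∀ i, 1 ≤ i → i ≤ k → ∀ a1 b1 a2 b2, Z i a1 b1 a2 b2 →
      ∀ c2, (a2, c2) ∈ pathsLe (⋃ R, I₂ R) (2 ^ (i - 1)) →
        (c2, b2) ∈ pathsLe (⋃ R, I₂ R) (2 ^ (i - 1)) →
        ∃ c1, Z (i - 1) a1 c1 a2 c2 ∧ Z (i - 1) c1 b1 c2 b2) :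
    ∀ (e : ExprD Λ), e.deg ≤ k → ∀ a1 b1 a2 b2, Z k a1 b1 a2 b2 →
      ((a1, b1) ∈ e.sem I₁ ↔ (a2, b2) ∈ e.sem I₂) := by
  have hdown : ∀ i j, j ≤ i → i ≤ k → ∀ a1 b1 a2 b2,
      Z i a1 b1 a2 b2 → Z j a1 b1 a2 b2 := by
    intro i
    induction i with
    | zero =>
      intro j hj _ a1 b1 a2 b2 h
      obtain rfl : j = 0 := Nat.le_zero.mp hj
      exact h
    | succ i ih =>
      intro j hj hik a1 b1 a2 b2 h
      rcases Nat.lt_or_ge j (i + 1) with hlt | hge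
      · exact ih j (Nat.lt_succ_iff.mp hlt) (le_trans (Nat.le_succ i) hik) a1 b1 a2 b2
          (hdec i hik a1 b1 a2 b2 h)
      · obtain rfl : j = i + 1 := le_antisymm hj hge
        exact h
  suffices H : ∀ (e : ExprD Λ) (i : ℕ), e.deg ≤ i → i ≤ k → ∀ a1 b1 a2 b2,
      Z i a1 b1 a2 b2 → ((a1, b1) ∈ e.sem I₁ ↔ (a2, b2) ∈ e.sem I₂) by
    intro e he a1 b1 a2 b2 hz
    exact H e k he le_rfl a1 b1 a2 b2 hz
  intro e
  induction e with
  | rel R =>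
    intro i _ hik a1 b1 a2 b2 hz
    exact (hatoms a1 b1 a2 b2 (hdown i 0 (Nat.zero_le _) hik _ _ _ _ hz)).1 R
  | empty => intro i _ _ a1 b1 a2 b2 _; simp [ExprD.sem]
  | idE =>
    intro i _ hik a1 b1 a2 b2 hz
    exact (hatoms a1 b1 a2 b2 (hdown i 0 (Nat.zero_le _) hik _ _ _ _ hz)).2
  | union e1 e2 ih1 ih2 =>
    intro i hdeg hik a1 b1 a2 b2 hz
    simp only [ExprD.deg, max_le_iff] at hdeg
    have h1 := ih1 i hdeg.1 hik a1 b1 a2 b2 hz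
    have h2 := ih2 i hdeg.2 hik a1 b1 a2 b2 hz
    simp only [ExprD.sem, Set.mem_union, h1, h2]
  | inter e1 e2 ih1 ih2 =>
    intro i hdeg hik a1 b1 a2 b2 hz
    simp only [ExprD.deg, max_le_iff] at hdeg
    have h1 := ih1 i hdeg.1 hik a1 b1 a2 b2 hz
    have h2 := ih2 i hdeg.2 hik a1 b1 a2 b2 hz
    simp only [ExprD.sem, Set.mem_inter_iff, h1, h2]
  | diff e1 e2 ih1 ih2 =>
    intro i hdeg hik a1 b1 a2 b2 hz
    simp only [ExprD.deg, max_le_iff] at hdeg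
    have h1 := ih1 i hdeg.1 hik a1 b1 a2 b2 hz
    have h2 := ih2 i hdeg.2 hik a1 b1 a2 b2 hz
    simp only [ExprD.sem, Set.mem_diff, h1, h2]
  | compE e1 e2 ih1 ih2 =>
    intro i hdeg hik a1 b1 a2 b2 hz
    simp only [ExprD.deg] at hdeg
    have hi1 : 1 ≤ i := by omega
    have hd1 : e1.deg ≤ i - 1 := by omega
    have hd2 : e2.deg ≤ i - 1 := by omega
    have hik' : i - 1 ≤ k := by omega
    have hm1 : (2 : ℕ) ^ e1.deg ≤ 2 ^ (i - 1) :=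
      Nat.pow_le_pow_right (by norm_num) hd1
    have hm2 : (2 : ℕ) ^ e2.deg ≤ 2 ^ (i - 1) :=
      Nat.pow_le_pow_right (by norm_num) hd2
    constructor
    · rintro ⟨c1, h1, h2⟩
      have p1 := pathsLe_mono hm1 (sem_subset_paths I₁ e1 h1)
      have p2 := pathsLe_mono hm2 (sem_subset_paths I₁ e2 h2)
      obtain ⟨c2, hz1, hz2⟩ := hforth i hi1 hik a1 b1 a2 b2 hz c1 p1 p2
      exact ⟨c2, (ih1 (i - 1) hd1 hik' _ _ _ _ hz1).1 h1,
        (ih2 (i - 1) hd2 hik' _ _ _ _ hz2).1 h2⟩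
    · rintro ⟨c2, h1, h2⟩
      have p1 := pathsLe_mono hm1 (sem_subset_paths I₂ e1 h1)
      have p2 := pathsLe_mono hm2 (sem_subset_paths I₂ e2 h2)
      obtain ⟨c1, hz1, hz2⟩ := hback i hi1 hik a1 b1 a2 b2 hz c2 p1 p2
      exact ⟨c1, (ih1 (i - 1) hd1 hik' _ _ _ _ hz1).2 h1,
        (ih2 (i - 1) hd2 hik' _ _ _ _ hz2).2 h2⟩
end

section
/- Let Z₀, Z₁, Z₂, ... be the decreasing sequence defined by: Z₀ = all (a₁,b₁,a₂,b₂) ∈ V₁² × V₂² satisfying the Atoms conditions (for each relation name R, (a₁,b₁) ∈ R(G₁) ↔ (a₂,b₂) ∈ R(G₂), and a₁ = b₁ ↔ a₂ = b₂); Z_i = elements of Z_{i-1} satisfying Composition Forth and Back at degree i with respect to Z_{i-1}. Then each Z_i is path-preserving at degree i: if (a₁,b₁,a₂,b₂) ∈ Z_i and (a₁,b₁) ∈ Paths_i(G₁), then (a₂,b₂) ∈ Paths_i(G₂). -/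

lemma pathLen_add {V : Type*} (E : Set (V × V)) (m n : ℕ) (p : V × V) :
    p ∈ pathLen E (m + n) ↔ ∃ c, (p.1, c) ∈ pathLen E m ∧ (c, p.2) ∈ pathLen E n := by
  induction n generalizing p with
  | zero =>
    simp only [Nat.add_zero]
    constructor
    · intro h; exact ⟨p.2, h, rfl⟩
    · rintro ⟨c, h1, h2⟩
      have : c = p.2 := h2
      subst this; exact h1
  | succ n ih =>
    constructor
    · rintro ⟨v, hv, hE⟩
      obtain ⟨c, h1, h2⟩ := ih _ |>.mp hv
      exact ⟨c, h1, v, h2, hE⟩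
    · rintro ⟨c, h1, v, h2, hE⟩
      exact ⟨v, (ih _).mpr ⟨c, h1, h2⟩, hE⟩

lemma pathsLe_split {V : Type*} (E : Set (V × V)) (n : ℕ) (a b : V)
    (h : (a, b) ∈ pathsLe E (2 * n)) :
    ∃ c, (a, c) ∈ pathsLe E n ∧ (c, b) ∈ pathsLe E n := by
  obtain ⟨m, hm, hp⟩ := h
  by_cases hle : m ≤ n
  · exact ⟨b, ⟨m, hle, hp⟩, ⟨0, Nat.zero_le _, rfl⟩⟩
  · have : m = n + (m - n) := by omega
    rw [this] at hp
    obtain ⟨c, h1, h2⟩ := (pathLen_add E n (m - n) (a, b)).mp hp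
    exact ⟨c, ⟨n, le_refl _, h1⟩, ⟨m - n, by omega, h2⟩⟩

lemma pathsLe_comp {V : Type*} (E : Set (V × V)) (m n : ℕ) (a c b : V)
    (h1 : (a, c) ∈ pathsLe E m) (h2 : (c, b) ∈ pathsLe E n) :
    (a, b) ∈ pathsLe E (m + n) := by
  obtain ⟨k, hk, hp⟩ := h1
  obtain ⟨l, hl, hq⟩ := h2
  exact ⟨k + l, by omega, (pathLen_add E k l (a, b)).mpr ⟨c, hp, hq⟩⟩

/-- The maximal bisimulation sequence (defined by iterated refinement from the
Atoms conditions by the Composition Forth and Back conditions) is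
path-preserving at every degree: if `(a₁,b₁,a₂,b₂) ∈ Z_i` and
`(a₁,b₁) ∈ Paths_i(G₁)`, then `(a₂,b₂) ∈ Paths_i(G₂)`. -/
theorem maximal_bisim_path_preserving {Λ V₁ V₂ : Type*}
    (I₁ : Λ → Set (V₁ × V₁)) (I₂ : Λ → Set (V₂ × V₂))
    (Z : ℕ → V₁ → V₁ → V₂ → V₂ → Prop)
    (hZ0 : ∀ a1 b1 a2 b2, Z 0 a1 b1 a2 b2 ↔
      (∀ R, (a1, b1) ∈ I₁ R ↔ (a2, b2) ∈ I₂ R) ∧ (a1 = b1 ↔ a2 = b2))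
    (hZsucc : ∀ i a1 b1 a2 b2, Z (i + 1) a1 b1 a2 b2 ↔
      Z i a1 b1 a2 b2 ∧
      (∀ c1, (a1, c1) ∈ pathsLe (⋃ R, I₁ R) (2 ^ i) →
        (c1, b1) ∈ pathsLe (⋃ R, I₁ R) (2 ^ i) →
        ∃ c2, Z i a1 c1 a2 c2 ∧ Z i c1 b1 c2 b2) ∧
      (∀ c2, (a2, c2) ∈ pathsLe (⋃ R, I₂ R) (2 ^ i) →
        (c2, b2) ∈ pathsLe (⋃ R, I₂ R) (2 ^ i) →
        ∃ c1, Z i a1 c1 a2 c2 ∧ Z i c1 b1 c2 b2)) :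
    ∀ i a1 b1 a2 b2, Z i a1 b1 a2 b2 →
      (a1, b1) ∈ pathsLe (⋃ R, I₁ R) (2 ^ i) →
      (a2, b2) ∈ pathsLe (⋃ R, I₂ R) (2 ^ i) := by
  
  intro i
  induction i with
  | zero =>
    intro a1 b1 a2 b2 hZ hp
    obtain ⟨hatoms, heq⟩ := (hZ0 a1 b1 a2 b2).mp hZ
    obtain ⟨m, hm, hp⟩ := hp
    interval_cases m
    · have : a1 = b1 := hp
      have : a2 = b2 := heq.mp this
      exact ⟨0, Nat.zero_le _, this⟩
    · obtain ⟨v, hv, hE⟩ := hp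
      have hv' : a1 = v := hv
      subst hv'
      obtain ⟨S, ⟨R, rfl⟩, hR⟩ := hE
      refine ⟨1, le_refl _, a2, rfl, ?_⟩
      exact Set.mem_iUnion.mpr ⟨R, (hatoms R).mp hR⟩
  | succ i ih =>
    intro a1 b1 a2 b2 hZ hp
    obtain ⟨hZi, hforth, hback⟩ := (hZsucc i a1 b1 a2 b2).mp hZ
    have h2 : (2 : ℕ) ^ (i + 1) = 2 * 2 ^ i := by ring
    rw [h2] at hp
    obtain ⟨c1, hac, hcb⟩ := pathsLe_split _ _ _ _ hp
    obtain ⟨c2, hZ1, hZ2⟩ := hforth c1 hac hcb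
    have p1 := ih a1 c1 a2 c2 hZ1 hac
    have p2 := ih c1 b1 c2 b2 hZ2 hcb
    have := pathsLe_comp _ _ _ _ _ _ p1 p2
    rw [h2]
    rwa [two_mul]
end

section
/- Let F be a fragment containing complement or difference. If (a₁,b₁) ∈ Paths_k^F(G₁) and the C(F)_k-type of (G₁,a₁,b₁) is contained in that of (G₂,a₂,b₂) (one-sided indistinguishability at degree k), then the two types are equal (full indistinguishability at degree k). Specialized to the fragment with operations union, intersection, composition, and difference over constants ∅ and id: if (a₁,b₁) is connected in G₁ by a directed path of length at most 2^k and for every expression e of degree ≤ k, (a₁,b₁) ∈ e(G₁) implies (a₂,b₂) ∈ e(G₂), then also for every such e, (a₂,b₂) ∈ e(G₂) implies (a₁,b₁) ∈ e(G₁). -/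
/-- Union of a list of expressions. -/
def unionList {Λ : Type*} : List (ExprD Λ) → ExprD Λ
  | [] => .empty
  | e :: es => .union e (unionList es)

lemma unionList_deg {Λ : Type*} (l : List (ExprD Λ)) (h : ∀ e ∈ l, e.deg = 0) :
    (unionList l).deg = 0 := by
  induction l with
  | nil => rfl
  | cons e es ih =>
      simp [unionList, ExprD.deg, h e (by simp), ih (fun e he => h e (by simp [he]))]

lemma unionList_sem {Λ V : Type*} (I : Λ → Set (V × V)) (l : List (ExprD Λ))
    (e : ExprD Λ) (he : e ∈ l) (p : V × V) (hp : p ∈ e.sem I) :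
    p ∈ (unionList l).sem I := by
  induction l with
  | nil => simp at he
  | cons f fs ih =>
      rcases List.mem_cons.1 he with rfl | h
      · exact Or.inl hp
      · exact Or.inr (ih h)

/-- Expression for the union of all relation names. -/
noncomputable def allRel (Λ : Type*) [Fintype Λ] : ExprD Λ :=
  unionList ((Finset.univ : Finset Λ).toList.map ExprD.rel)

lemma allRel_deg (Λ : Type*) [Fintype Λ] : (allRel Λ).deg = 0 := by
  apply unionList_deg
  intro e he
  simp only [List.mem_map] at he
  obtain ⟨R, _, rfl⟩ := he
  rfl

lemma allRel_sem {Λ V : Type*} [Fintype Λ] (I : Λ → Set (V × V)) (p : V × V)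
    (hp : p ∈ ⋃ R, I R) : p ∈ (allRel Λ).sem I := by
  obtain ⟨_, ⟨R, rfl⟩, hR⟩ := hp
  exact unionList_sem I _ (ExprD.rel R) (by simp) p hR

/-- Expression for paths of length at most `2^k`. -/
noncomputable def pathsExpr (Λ : Type*) [Fintype Λ] : ℕ → ExprD Λ
  | 0 => .union .idE (allRel Λ)
  | k + 1 => .compE (pathsExpr Λ k) (pathsExpr Λ k)

lemma pathsExpr_deg (Λ : Type*) [Fintype Λ] (k : ℕ) : (pathsExpr Λ k).deg ≤ k := by
  induction k with
  | zero => simp [pathsExpr, ExprD.deg, allRel_deg]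
  | succ k ih => simp only [pathsExpr, ExprD.deg]; omega

lemma pathLen_split {V : Type*} (E : Set (V × V)) (m n : ℕ) (a b : V)
    (h : (a, b) ∈ pathLen E (m + n)) :
    ∃ v, (a, v) ∈ pathLen E m ∧ (v, b) ∈ pathLen E n := by
  induction n generalizing b with
  | zero => exact ⟨b, h, rfl⟩
  | succ n ih =>
      obtain ⟨w, hw, hwb⟩ := h
      obtain ⟨v, hv, hvw⟩ := ih w hw
      exact ⟨v, hv, ⟨w, hvw, hwb⟩⟩

lemma pathsExpr_sem {Λ V : Type*} [Fintype Λ] (I : Λ → Set (V × V)) (k m : ℕ)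
    (hm : m ≤ 2 ^ k) (a b : V) (h : (a, b) ∈ pathLen (⋃ R, I R) m) :
    (a, b) ∈ (pathsExpr Λ k).sem I := by
  induction k generalizing m a b with
  | zero =>
      interval_cases m
      · exact Or.inl h
      · obtain ⟨v, hv, hvb⟩ := h
        cases hv
        exact Or.inr (allRel_sem I _ hvb)
  | succ k ih =>
      have h1 : min m (2 ^ k) + (m - min m (2 ^ k)) = m := by omega
      rw [← h1] at h
      obtain ⟨v, hv1, hv2⟩ := pathLen_split _ _ _ _ _ h
      exact ⟨v, ih _ (by omega) _ _ hv1, ih _ (by simp [pow_succ] at hm ⊢; omega) _ _ hv2⟩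

/-- In a fragment with difference, one-sided indistinguishability at degree
`k` implies full indistinguishability at degree `k`, provided the marked pair
lies in `Paths_k(G₁)`: if `(a₁,b₁)` is connected by a directed path of length
at most `2^k` in `G₁` and every expression of degree at most `k` satisfied by
`(a₁,b₁)` in `G₁` is satisfied by `(a₂,b₂)` in `G₂`, then the converse
transfer also holds. -/
theorem one_sided_implies_two_sided {Λ : Type*} [Fintype Λ] {V₁ V₂ : Type*}
    (I₁ : Λ → Set (V₁ × V₁)) (I₂ : Λ → Set (V₂ × V₂)) (k : ℕ)
    (a1 b1 : V₁) (a2 b2 : V₂)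
    (hpath : (a1, b1) ∈ pathsLe (⋃ R, I₁ R) (2 ^ k))
    (honesided : ∀ e : ExprD Λ, e.deg ≤ k →
      (a1, b1) ∈ e.sem I₁ → (a2, b2) ∈ e.sem I₂) :
    ∀ e : ExprD Λ, e.deg ≤ k → (a2, b2) ∈ e.sem I₂ → (a1, b1) ∈ e.sem I₁ := by
  intro e hdeg h2
  by_contra h1
  obtain ⟨m, hm, hpm⟩ := hpath
  have hpe : (a1, b1) ∈ (pathsExpr Λ k).sem I₁ := pathsExpr_sem I₁ k m hm a1 b1 hpm
  have hdiff : ((ExprD.diff (pathsExpr Λ k) e)).deg ≤ k := by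
    have := pathsExpr_deg Λ k
    simp only [ExprD.deg]; omega
  have := honesided (ExprD.diff (pathsExpr Λ k) e) hdiff ⟨hpe, h1⟩
  exact this.2 h2
end
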